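/- arXiv:1608.05985 — 2 statements merged into one kernel-verified Lean document; each statement's English description precedes it below -/
import Mathlib

section
/- (Moments as probability weighted moments) Let m be a positive integer and s ≥ 0. Suppose 0 < Ḡ(t) ≤ 1 for all t > 0, and that for each j = 0, …, m−1 the function t ↦ t^s (F̄^MO(t))^{θ(j+n)−1} f^MO(t) is Lebesgue integrable on (0, ∞). Then ∫₀^∞ t^s f^BGMO(t) dt = Σ_{j=0}^{m−1} (θ/B(m,n)) (−1)^j C(m−1, j) ∫₀^∞ t^s (F̄^MO(t))^{θ(j+n)−1} f^MO(t) dt. -/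
/-- The GMO survival function `F̄^GMO(t) = (α Ḡ(t)/(1 − ᾱ Ḡ(t)))^θ`. -/
noncomputable def FbarGMO (G : ℝ → ℝ) (α θ t : ℝ) : ℝ :=
  (α * (1 - G t) / (1 - (1 - α) * (1 - G t))) ^ θ

/-- The GMO pdf `f^GMO(t) = θ α^θ g(t) Ḡ(t)^{θ−1}/(1 − ᾱ Ḡ(t))^{θ+1}`. -/
noncomputable def fGMO (G g : ℝ → ℝ) (α θ t : ℝ) : ℝ :=
  θ * α ^ θ * g t * (1 - G t) ^ (θ - 1) / (1 - (1 - α) * (1 - G t)) ^ (θ + 1)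

/-- The beta function `B(m,n) = ∫₀¹ v^{m−1}(1−v)^{n−1} dv`. -/
noncomputable def betaFn (m n : ℝ) : ℝ :=
  ∫ v in (0:ℝ)..1, v ^ (m - 1) * (1 - v) ^ (n - 1)

/-- The BGMO-G pdf
`f^BGMO(t) = B(m,n)⁻¹ f^GMO(t) [1 − F̄^GMO(t)]^{m−1} [F̄^GMO(t)]^{n−1}`. -/
noncomputable def fBGMO (G g : ℝ → ℝ) (α θ m n t : ℝ) : ℝ :=
  (betaFn m n)⁻¹ * fGMO G g α θ t
    * (1 - FbarGMO G α θ t) ^ (m - 1) * (FbarGMO G α θ t) ^ (n - 1)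

/-- moments as probability weighted moments: let `m` be a positive
integer and `s ≥ 0`. Suppose `0 < Ḡ(t) ≤ 1` for all `t > 0`, and for each
`j = 0, …, m−1` the function `t ↦ t^s (F̄^MO(t))^{θ(j+n)−1} f^MO(t)` is Lebesgue
integrable on `(0, ∞)`. Then
`∫₀^∞ t^s f^BGMO(t) dt
  = Σ_{j=0}^{m−1} (θ/B(m,n)) (−1)^j C(m−1, j) ∫₀^∞ t^s (F̄^MO(t))^{θ(j+n)−1} f^MO(t) dt`. -/
theorem bgmo_moments_pwm (G g : ℝ → ℝ) (α θ n s : ℝ)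
    (hα : 0 < α) (hθ : 0 < θ) (hn : 0 < n) (hs : 0 ≤ s)
    (m : ℕ) (hm : 0 < m)
    (hG : ∀ t : ℝ, 0 < t → 0 < 1 - G t ∧ 1 - G t ≤ 1)
    (hint : ∀ j ∈ Finset.range m,
      MeasureTheory.IntegrableOn
        (fun t : ℝ => t ^ s
          * (α * (1 - G t) / (1 - (1 - α) * (1 - G t))) ^ (θ * ((j : ℝ) + n) - 1)
          * (α * g t / (1 - (1 - α) * (1 - G t)) ^ 2))
        (Set.Ioi (0:ℝ))) :
    (∫ t in Set.Ioi (0:ℝ), t ^ s * fBGMO G g α θ m n t)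
      = ∑ j ∈ Finset.range m,
          (θ / betaFn m n) * (-1 : ℝ) ^ j * (Nat.choose (m - 1) j : ℝ)
            * ∫ t in Set.Ioi (0:ℝ), t ^ s
                * (α * (1 - G t) / (1 - (1 - α) * (1 - G t))) ^ (θ * ((j : ℝ) + n) - 1)
                * (α * g t / (1 - (1 - α) * (1 - G t)) ^ 2) := by

  have key : ∀ t : ℝ, t ∈ Set.Ioi (0:ℝ) →
      t ^ s * fBGMO G g α θ m n t
        = ∑ j ∈ Finset.range m,
            ((θ / betaFn m n) * (-1 : ℝ) ^ j * (Nat.choose (m - 1) j : ℝ))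
              * (t ^ s
                * (α * (1 - G t) / (1 - (1 - α) * (1 - G t))) ^ (θ * ((j : ℝ) + n) - 1)
                * (α * g t / (1 - (1 - α) * (1 - G t)) ^ 2)) := by
    intro t ht
    obtain ⟨hGb, hGb1⟩ := hG t ht
    simp only [fBGMO, fGMO, FbarGMO]
    set Gb := 1 - G t with hGbdef
    have hD : 0 < 1 - (1 - α) * Gb := by nlinarith
    set D := 1 - (1 - α) * Gb with hDdef
    have hu : 0 < α * Gb / D := by positivity
    have hu1 : α * Gb / D ≤ 1 := by
      rw [div_le_one hD]; nlinarith
    set u := α * Gb / D with hudef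
    set x := u ^ θ with hxdef
    have hx0 : 0 ≤ x := Real.rpow_nonneg hu.le θ
    -- binomial expansion
    have hB : (1 - x) ^ ((m : ℝ) - 1)
        = ∑ j ∈ Finset.range m, (-1 : ℝ) ^ j * (Nat.choose (m - 1) j : ℝ) * x ^ j := by
      have hcast : (m : ℝ) - 1 = ((m - 1 : ℕ) : ℝ) := by
        rw [Nat.cast_sub hm, Nat.cast_one]
      rw [hcast, Real.rpow_natCast]
      calc (1 - x) ^ (m - 1) = (-x + 1) ^ (m - 1) := by ring
        _ = ∑ k ∈ Finset.range (m - 1 + 1),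
              (-x) ^ k * 1 ^ (m - 1 - k) * ((m - 1).choose k : ℝ) := add_pow (-x) 1 (m - 1)
        _ = _ := by
            rw [Nat.sub_add_cancel hm]
            refine Finset.sum_congr rfl fun j _ => ?_
            rw [neg_pow, one_pow]; ring
    -- fGMO in terms of u
    have hA : θ * α ^ θ * g t * Gb ^ (θ - 1) / D ^ (θ + 1)
        = θ * u ^ (θ - 1) * (α * g t / D ^ 2) := by
      have e1 : u ^ (θ - 1) = α ^ (θ - 1) * Gb ^ (θ - 1) / D ^ (θ - 1) := by
        rw [hudef, Real.div_rpow (by positivity) hD.le,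
          Real.mul_rpow hα.le hGb.le]
      have e2 : α ^ θ = α ^ (θ - 1) * α := by
        nth_rewrite 1 [show θ = (θ - 1) + 1 by ring]
        rw [Real.rpow_add hα, Real.rpow_one]
      have e3 : D ^ (θ + 1) = D ^ (θ - 1) * D ^ 2 := by
        rw [show θ + 1 = (θ - 1) + 2 by ring, Real.rpow_add hD,
          show ((2:ℝ)) = ((2:ℕ) : ℝ) by norm_num, Real.rpow_natCast]
      rw [e1, e2, e3]
      have h1 : D ^ (θ - 1) ≠ 0 := by positivity
      have h2 : (D:ℝ) ^ 2 ≠ 0 := by positivity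
      field_simp
    rw [hB, hA]
    rw [Finset.mul_sum, Finset.sum_mul, Finset.mul_sum]
    refine Finset.sum_congr rfl fun j _ => ?_
    have h1 : x ^ ((n : ℝ) - 1) = u ^ (θ * (n - 1)) :=
      (Real.rpow_mul hu.le θ (n - 1)).symm
    have h2 : x ^ j = u ^ (θ * (j : ℝ)) := by
      rw [hxdef, ← Real.rpow_natCast (u ^ θ) j, ← Real.rpow_mul hu.le]
    have h3 : u ^ (θ * ((j : ℝ) + n) - 1)
        = u ^ (θ - 1) * u ^ (θ * (n - 1)) * u ^ (θ * (j : ℝ)) := by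
      rw [← Real.rpow_add hu, ← Real.rpow_add hu]
      congr 1
      ring
    rw [h1, h2, h3]
    ring
  rw [MeasureTheory.setIntegral_congr_fun measurableSet_Ioi key]
  rw [MeasureTheory.integral_finset_sum _ (fun j hj => ((hint j hj).const_mul _))]
  simp only [MeasureTheory.integral_const_mul]
end

section
/- (Proposition 2, density asymptote) Suppose 0 < Ḡ(t) < 1 and g(t) > 0 for all sufficiently large t, and Ḡ(t) → 0 as t → ∞. Then f^BGMO(t) ∼ θ α^{θn} g(t) Ḡ(t)^{θn−1}/B(m,n) as t → ∞; precisely, the ratio B(m,n) f^BGMO(t) / (θ α^{θn} g(t) Ḡ(t)^{θn−1}) tends to 1 as t → ∞. -/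
open Filter

open Topology

/-!
Writing `u = Ḡ(t)` and `D = 1 − ᾱu`, the GMO factors combine exactly:
`f^GMO · (F̄^GMO)^{n−1} = θ α^{θn} g u^{θn−1} / D^{θn+1}`. Hence the ratio in question equals
`(1 − F̄^GMO)^{m−1} / D^{θn+1}`, a continuous function of `u` that is `1` at `u = 0`
(as `θ > 0`, `F̄^GMO` vanishes with `u`); it remains to let `u → 0`. Positivity of
`B(m,n)` comes from its Gamma-function expression `Γ(m)Γ(n)/Γ(m+n)`.
-/

theorem betaFn_eq_betaIntegral_re (m n : ℝ) : betaFn m n = (Complex.betaIntegral m n).re := by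
  have hcongr : Set.EqOn (fun x : ℝ => ((x ^ (m - 1) * (1 - x) ^ (n - 1) : ℝ) : ℂ))
      (fun x : ℝ => (x : ℂ) ^ ((m : ℂ) - 1) * (1 - (x : ℂ)) ^ ((n : ℂ) - 1)) (Set.uIcc 0 1) := by
    intro x hx
    rw [Set.uIcc_of_le zero_le_one] at hx
    push_cast [Complex.ofReal_cpow hx.1, Complex.ofReal_cpow (sub_nonneg.2 hx.2)]
    rfl
  rw [Complex.betaIntegral, ← intervalIntegral.integral_congr hcongr,
    intervalIntegral.integral_ofReal, Complex.ofReal_re, betaFn]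

theorem betaFn_pos {m n : ℝ} (hm : 0 < m) (hn : 0 < n) : 0 < betaFn m n := by
  rw [betaFn_eq_betaIntegral_re, ← ProbabilityTheory.beta_eq_betaIntegralReal m n hm hn]
  exact ProbabilityTheory.beta_pos hm hn

theorem fGMO_mul_FbarGMO_rpow {G : ℝ → ℝ} {α t : ℝ} (g : ℝ → ℝ) (θ n : ℝ) (hα : 0 < α)
    (hu : 0 < 1 - G t) (hD : 0 < 1 - (1 - α) * (1 - G t)) :
    fGMO G g α θ t * FbarGMO G α θ t ^ (n - 1)
      = θ * α ^ (θ * n) * g t * (1 - G t) ^ (θ * n - 1)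
        / (1 - (1 - α) * (1 - G t)) ^ (θ * n + 1) := by
  rw [fGMO, FbarGMO]
  set u := 1 - G t
  set D := 1 - (1 - α) * u
  have rpow_split : ∀ {x : ℝ}, 0 < x → ∀ a b c : ℝ, a + b = c → x ^ c = x ^ a * x ^ b :=
    fun hx a b c h => by rw [← h, Real.rpow_add hx]
  rw [← Real.rpow_mul (by positivity), Real.div_rpow (by positivity) hD.le,
    Real.mul_rpow hα.le hu.le, rpow_split hα θ (θ * (n - 1)) (θ * n) (by ring),
    rpow_split hu (θ - 1) (θ * (n - 1)) (θ * n - 1) (by ring),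
    rpow_split hD (θ + 1) (θ * (n - 1)) (θ * n + 1) (by ring)]
  field_simp

theorem tendsto_gmo_correction_nhds_zero {θ : ℝ} (α m n : ℝ) (hθ : 0 < θ) :
    Tendsto (fun u : ℝ => (1 - (α * u / (1 - (1 - α) * u)) ^ θ) ^ (m - 1)
      / (1 - (1 - α) * u) ^ (θ * n + 1)) (𝓝 0) (𝓝 1) := by
  have hcont : ContinuousAt (fun u : ℝ => (1 - (α * u / (1 - (1 - α) * u)) ^ θ) ^ (m - 1)
      / (1 - (1 - α) * u) ^ (θ * n + 1)) 0 := by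
    fun_prop (disch := simp [Real.zero_rpow hθ.ne', hθ.le])
  simpa [Real.zero_rpow hθ.ne'] using hcont.tendsto

theorem bgmo_ratio_eq {G g : ℝ → ℝ} {α θ m n t : ℝ} (hα : 0 < α) (hθ : 0 < θ)
    (hB : betaFn m n ≠ 0) (hu : 0 < 1 - G t) (hu1 : 1 - G t ≤ 1) (hg : 0 < g t) :
    betaFn m n * fBGMO G g α θ m n t / (θ * α ^ (θ * n) * g t * (1 - G t) ^ (θ * n - 1))
      = (1 - FbarGMO G α θ t) ^ (m - 1) / (1 - (1 - α) * (1 - G t)) ^ (θ * n + 1) := by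
  have hD : 0 < 1 - (1 - α) * (1 - G t) := by nlinarith
  have hK : θ * α ^ (θ * n) * g t * (1 - G t) ^ (θ * n - 1) ≠ 0 := by positivity
  calc _ = (1 - FbarGMO G α θ t) ^ (m - 1) * (fGMO G g α θ t * FbarGMO G α θ t ^ (n - 1))
        / (θ * α ^ (θ * n) * g t * (1 - G t) ^ (θ * n - 1)) := by
          rw [fBGMO]; field_simp
    _ = _ := by
      rw [fGMO_mul_FbarGMO_rpow g θ n hα hu hD]
      field_simp

/-- Proposition 2, density asymptote: suppose `0 < Ḡ(t) < 1` and
`g(t) > 0` for all sufficiently large `t`, and `Ḡ(t) → 0` as `t → ∞`. Then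
`f^BGMO(t) ∼ θ α^{θn} g(t) Ḡ(t)^{θn−1}/B(m,n)` as `t → ∞`; precisely, the ratio
`B(m,n) f^BGMO(t) / (θ α^{θn} g(t) Ḡ(t)^{θn−1})` tends to `1` as `t → ∞`. -/
theorem bgmo_density_asymptote (G g : ℝ → ℝ) (α θ m n : ℝ)
    (hα : 0 < α) (hθ : 0 < θ) (hm : 0 < m) (hn : 0 < n)
    (hev : ∀ᶠ t in atTop, 0 < 1 - G t ∧ 1 - G t < 1 ∧ 0 < g t)
    (hlim : Tendsto (fun t : ℝ => 1 - G t) atTop (nhds 0)) :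
    Tendsto (fun t : ℝ =>
        betaFn m n * fBGMO G g α θ m n t
          / (θ * α ^ (θ * n) * g t * (1 - G t) ^ (θ * n - 1)))
      atTop (nhds 1) := by
  have hB : betaFn m n ≠ 0 := (betaFn_pos hm hn).ne'
  refine ((tendsto_gmo_correction_nhds_zero α m n hθ).comp hlim).congr' ?_
  filter_upwards [hev] with t ⟨hu, hu1, hg⟩
  exact (bgmo_ratio_eq hα hθ hB hu hu1.le hg).symm
end
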